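/- Completeness of refinement with respect to implementation-set inclusion: for any two locally consistent specifications S and T over the same alphabet (Act^S = Act^T with the same partition into inputs and outputs), S ≤ T if and only if mod(S) ⊆ mod(T). -/

import Mathlib

open scoped NNReal

/-- A (raw) Timed I/O Transition System over an ambient action type `Act`
and state type `Q`.  The actual sets of input and output actions are the
fields `inputs` and `outputs`; `actTrans` is the action-labelled part of
the transition relation and `delayTrans` the delay-labelled part. -/
structure TIOTS (Act : Type) (Q : Type) where
  init : Q
  inputs : Set Act
  outputs : Set Act
  actTrans : Q → Act → Q → Prop
  delayTrans : Q → ℝ≥0 → Q → Prop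

namespace TIOTS

variable {Act Q Q1 Q2 Q3 : Type}

/-- The alphabet (action set) of a TIOTS. -/
def acts (S : TIOTS Act Q) : Set Act := S.inputs ∪ S.outputs

/-- The axioms of Timed I/O Transition Systems: inputs and outputs are
disjoint, action transitions are labelled by actions of the alphabet,
determinism (for actions and delays), time reflexivity and time additivity. -/
def IsTIOTS (S : TIOTS Act Q) : Prop :=
  Disjoint S.inputs S.outputs ∧
  (∀ q a q', S.actTrans q a q' → a ∈ S.acts) ∧
  (∀ q a q' q'', S.actTrans q a q' → S.actTrans q a q'' → q' = q'') ∧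
  (∀ q (d : ℝ≥0) q' q'', S.delayTrans q d q' → S.delayTrans q d q'' → q' = q'') ∧
  (∀ q, S.delayTrans q 0 q) ∧
  (∀ q q'' (d₁ d₂ : ℝ≥0),
    S.delayTrans q (d₁ + d₂) q'' ↔ ∃ q', S.delayTrans q d₁ q' ∧ S.delayTrans q' d₂ q'')

/-- Input-enabledness: every state accepts every input of the alphabet. -/
def InputEnabled (S : TIOTS Act Q) : Prop :=
  ∀ q, ∀ a ∈ S.inputs, ∃ q', S.actTrans q a q'

/-- A specification is an input-enabled TIOTS. -/
def IsSpecification (S : TIOTS Act Q) : Prop :=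
  S.IsTIOTS ∧ S.InputEnabled

/-- A state allows independent progress if it can delay forever, or can
delay until an output is enabled. -/
def IndependentProgress (S : TIOTS Act Q) (q : Q) : Prop :=
  (∀ d : ℝ≥0, ∃ q', S.delayTrans q d q') ∨
  (∃ (d : ℝ≥0) (q' : Q), ∃ o ∈ S.outputs,
    S.delayTrans q d q' ∧ ∃ q'', S.actTrans q' o q'')

/-- Output urgency of a state: if an output is enabled, no positive delay is. -/
def OutputUrgent (S : TIOTS Act Q) (q : Q) : Prop :=
  ∀ o ∈ S.outputs, ∀ (q' : Q) (d : ℝ≥0) (q'' : Q),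
    S.actTrans q o q' → S.delayTrans q d q'' → d = 0

/-- An implementation is a specification all of whose states are
output urgent and allow independent progress. -/
def IsImplementation (P : TIOTS Act Q) : Prop :=
  P.IsSpecification ∧ ∀ q, P.OutputUrgent q ∧ P.IndependentProgress q

/-- A locally consistent specification: every state allows independent progress. -/
def LocallyConsistent (S : TIOTS Act Q) : Prop :=
  S.IsSpecification ∧ ∀ q, S.IndependentProgress q

/-- Refinement `S ≤ T` (including the side conditions on the alphabets). -/
def Refines (S : TIOTS Act Q1) (T : TIOTS Act Q2) : Prop :=
  Disjoint S.inputs T.outputs ∧ Disjoint S.outputs T.inputs ∧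
  S.inputs ⊆ T.inputs ∧ T.outputs ⊆ S.outputs ∧
  ∃ R : Q1 → Q2 → Prop,
    R S.init T.init ∧
    ∀ s t, R s t →
      (∀ a ∈ T.inputs ∩ S.inputs, ∀ t', T.actTrans t a t' →
        ∃ s', S.actTrans s a s' ∧ R s' t') ∧
      (∀ a ∈ T.inputs \ S.inputs, ∀ t', T.actTrans t a t' → R s t') ∧
      (∀ a ∈ S.outputs ∩ T.outputs, ∀ s', S.actTrans s a s' →
        ∃ t', T.actTrans t a t' ∧ R s' t') ∧
      (∀ a ∈ S.outputs \ T.outputs, ∀ s', S.actTrans s a s' → R s' t) ∧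
      (∀ (d : ℝ≥0) (s' : Q1), S.delayTrans s d s' →
        ∃ t', T.delayTrans t d t' ∧ R s' t')

/-- `Mod S P` : `P` belongs to `mod(S)`, i.e. `P` is an implementation over
the alphabet of `S` satisfying (refining) `S`. -/
def Mod (S : TIOTS Act Q1) (P : TIOTS Act Q2) : Prop :=
  P.IsImplementation ∧ P.inputs = S.inputs ∧ P.outputs = S.outputs ∧ P.Refines S

/-- The TIOTS obtained from `S` by replacing the initial state by `q`. -/
def withInit (S : TIOTS Act Q) (q : Q) : TIOTS Act Q := { S with init := q }

/-- Reachability by finite sequences of action and delay transitions. -/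
inductive Reach (S : TIOTS Act Q) : Q → Q → Prop where
  | refl (q : Q) : Reach S q q
  | act {q q' q'' : Q} (a : Act) : S.actTrans q a q' → Reach S q' q'' → Reach S q q''
  | delay {q q' q'' : Q} (d : ℝ≥0) : S.delayTrans q d q' → Reach S q' q'' → Reach S q q''

/-- The set of error states relative to a set `X`. -/
def errSet (S : TIOTS Act Q) (X : Set Q) : Set Q :=
  { q | (∃ d : ℝ≥0, ¬ ∃ q', S.delayTrans q d q') ∧
        ∀ (d : ℝ≥0), ∀ o ∈ S.outputs, ∀ q', S.delayTrans q d q' →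
          ((¬ ∃ q'', S.actTrans q' o q'') ∨ ∀ q'', S.actTrans q' o q'' → q'' ∈ X) }

/-- The operator `Θ` whose greatest fixpoint is the set of consistent states. -/
def Theta (S : TIOTS Act Q) (X : Set Q) : Set Q :=
  (Set.univ \ S.errSet (Set.univ \ X)) ∩
  { q | ∀ d : ℝ≥0,
      (∀ q', S.delayTrans q d q' →
        (q' ∈ X ∧ ∀ i ∈ S.inputs, ∃ q'', q'' ∈ X ∧ S.actTrans q' i q'')) ∨
      (∃ d' : ℝ≥0, d' ≤ d ∧ ∃ q' q'', q' ∈ X ∧ q'' ∈ X ∧ ∃ o ∈ S.outputs,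
        S.delayTrans q d' q' ∧ S.actTrans q' o q'' ∧
        ∀ i ∈ S.inputs, ∃ q''', q''' ∈ X ∧ S.actTrans q' i q''') }

/-- The set of consistent states: the greatest fixpoint of the monotone
operator `Θ`, given by Knaster–Tarski as the union of all postfixed points. -/
def consSet (S : TIOTS Act Q) : Set Q := ⋃₀ { X | X ⊆ S.Theta X }

/-- Adversarial pruning `S^Δ`: restrict the states to the consistent ones and
restrict the transition relation accordingly. -/
def prune (S : TIOTS Act Q) (h : S.init ∈ S.consSet) :
    TIOTS Act {q : Q // q ∈ S.consSet} where
  init := ⟨S.init, h⟩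
  inputs := S.inputs
  outputs := S.outputs
  actTrans := fun q a q' => S.actTrans q.1 a q'.1
  delayTrans := fun q d q' => S.delayTrans q.1 d q'.1

/-- Conjunction of TIOTSs. -/
def conj (S : TIOTS Act Q1) (T : TIOTS Act Q2) : TIOTS Act (Q1 × Q2) where
  init := (S.init, T.init)
  inputs := S.inputs ∪ T.inputs
  outputs := S.outputs ∪ T.outputs
  actTrans := fun q a q' =>
    (a ∈ S.acts ∩ T.acts ∧ S.actTrans q.1 a q'.1 ∧ T.actTrans q.2 a q'.2) ∨
    (a ∈ S.acts \ T.acts ∧ S.actTrans q.1 a q'.1 ∧ q'.2 = q.2) ∨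
    (a ∈ T.acts \ S.acts ∧ T.actTrans q.2 a q'.2 ∧ q'.1 = q.1)
  delayTrans := fun q d q' => S.delayTrans q.1 d q'.1 ∧ T.delayTrans q.2 d q'.2

/-- Parallel composition of TIOTSs. -/
def par (S : TIOTS Act Q1) (T : TIOTS Act Q2) : TIOTS Act (Q1 × Q2) where
  init := (S.init, T.init)
  inputs := (S.inputs \ T.outputs) ∪ (T.inputs \ S.outputs)
  outputs := S.outputs ∪ T.outputs
  actTrans := fun q a q' =>
    (a ∈ S.acts ∩ T.acts ∧ S.actTrans q.1 a q'.1 ∧ T.actTrans q.2 a q'.2) ∨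
    (a ∈ S.acts \ T.acts ∧ S.actTrans q.1 a q'.1 ∧ q'.2 = q.2) ∨
    (a ∈ T.acts \ S.acts ∧ T.actTrans q.2 a q'.2 ∧ q'.1 = q.1)
  delayTrans := fun q d q' => S.delayTrans q.1 d q'.1 ∧ T.delayTrans q.2 d q'.2

/-- States of the quotient: pairs of states, a universal state and an error state. -/
inductive QSt (Q1 Q2 : Type) where
  | st : Q1 → Q2 → QSt Q1 Q2
  | univ : QSt Q1 Q2
  | err : QSt Q1 Q2

/-- Action transitions of the quotient `T \\ S`. -/
def quotAct (T : TIOTS Act Q1) (S : TIOTS Act Q2) :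
    QSt Q1 Q2 → Act → QSt Q1 Q2 → Prop
  | QSt.st qT qS, a, QSt.st qT' qS' =>
      (a ∈ S.acts ∩ T.acts ∧ T.actTrans qT a qT' ∧ S.actTrans qS a qS') ∨
      (a ∈ S.acts \ T.acts ∧ S.actTrans qS a qS' ∧ qT' = qT) ∨
      (a ∈ T.acts \ S.acts ∧ T.actTrans qT a qT' ∧ qS' = qS)
  | QSt.st _ qS, a, QSt.univ => a ∈ S.outputs ∧ ¬ ∃ qS', S.actTrans qS a qS'
  | QSt.st qT qS, a, QSt.err =>
      a ∈ S.outputs ∩ T.outputs ∧ (¬ ∃ qT', T.actTrans qT a qT') ∧ ∃ qS', S.actTrans qS a qS'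
  | QSt.univ, a, QSt.univ =>
      a ∈ (T.inputs ∪ S.outputs) ∪ ((T.outputs \ S.outputs) ∪ (S.inputs \ T.inputs))
  | QSt.err, a, QSt.err => a ∈ T.inputs ∪ S.outputs
  | _, _, _ => False

/-- Delay transitions of the quotient `T \\ S`. -/
def quotDelay (T : TIOTS Act Q1) (S : TIOTS Act Q2) :
    QSt Q1 Q2 → ℝ≥0 → QSt Q1 Q2 → Prop
  | QSt.st qT qS, d, QSt.st qT' qS' => T.delayTrans qT d qT' ∧ S.delayTrans qS d qS'
  | QSt.st _ qS, d, QSt.univ => ¬ ∃ qS', S.delayTrans qS d qS'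
  | QSt.univ, _, QSt.univ => True
  | _, _, _ => False

/-- The quotient `T \\ S`. -/
def quot (T : TIOTS Act Q1) (S : TIOTS Act Q2) : TIOTS Act (QSt Q1 Q2) where
  init := QSt.st T.init S.init
  inputs := T.inputs ∪ S.outputs
  outputs := (T.outputs \ S.outputs) ∪ (S.inputs \ T.inputs)
  actTrans := T.quotAct S
  delayTrans := T.quotDelay S

end TIOTS

/-- Clock guards: Boolean formulas over atomic clock constraints `x ≺ n`. -/
inductive ClockGuard (C : Type) where
  | tt : ClockGuard C
  | ff : ClockGuard C
  | lt : C → ℕ → ClockGuard C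
  | le : C → ℕ → ClockGuard C
  | gt : C → ℕ → ClockGuard C
  | ge : C → ℕ → ClockGuard C
  | eq : C → ℕ → ClockGuard C
  | and : ClockGuard C → ClockGuard C → ClockGuard C
  | or : ClockGuard C → ClockGuard C → ClockGuard C
  | not : ClockGuard C → ClockGuard C

namespace ClockGuard

variable {C C' : Type}

/-- Satisfaction of a clock guard by a clock valuation. -/
def sat (v : C → ℝ≥0) : ClockGuard C → Prop
  | tt => True
  | ff => False
  | lt x n => v x < (n : ℝ≥0)
  | le x n => v x ≤ (n : ℝ≥0)
  | gt x n => (n : ℝ≥0) < v x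
  | ge x n => (n : ℝ≥0) ≤ v x
  | eq x n => v x = (n : ℝ≥0)
  | and g₁ g₂ => sat v g₁ ∧ sat v g₂
  | or g₁ g₂ => sat v g₁ ∨ sat v g₂
  | not g => ¬ sat v g

/-- Renaming of the clocks of a guard. -/
def map (f : C → C') : ClockGuard C → ClockGuard C'
  | tt => tt
  | ff => ff
  | lt x n => lt (f x) n
  | le x n => le (f x) n
  | gt x n => gt (f x) n
  | ge x n => ge (f x) n
  | eq x n => eq (f x) n
  | and g₁ g₂ => and (map f g₁) (map f g₂)
  | or g₁ g₂ => or (map f g₁) (map f g₂)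
  | not g => not (map f g)

end ClockGuard

/-- A Timed I/O Automaton over action type `Act`, location type `L`
and clock type `C`. -/
structure TIOA (Act L C : Type) where
  init : L
  inputs : Set Act
  outputs : Set Act
  edges : Set (L × Act × ClockGuard C × Set C × L)
  inv : L → ClockGuard C

namespace TIOA

variable {Act L C L1 L2 C1 C2 : Type}

/-- The alphabet (action set) of a TIOA. -/
def acts (A : TIOA Act L C) : Set Act := A.inputs ∪ A.outputs

open Classical in
/-- Reset the clocks in `c` to zero. -/
noncomputable def resetVal (v : C → ℝ≥0) (c : Set C) : C → ℝ≥0 :=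
  fun x => if x ∈ c then 0 else v x

/-- The semantics of a TIOA as a TIOTS. -/
noncomputable def sem (A : TIOA Act L C) : TIOTS Act (L × (C → ℝ≥0)) where
  init := (A.init, fun _ => 0)
  inputs := A.inputs
  outputs := A.outputs
  actTrans := fun q a q' =>
    ∃ g c, (q.1, a, g, c, q'.1) ∈ A.edges ∧ ClockGuard.sat q.2 g ∧
      q'.2 = resetVal q.2 c ∧ ClockGuard.sat q'.2 (A.inv q'.1)
  delayTrans := fun q d q' =>
    q'.1 = q.1 ∧ q'.2 = (fun x => q.2 x + d) ∧
    ClockGuard.sat q'.2 (A.inv q.1) ∧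
    ∀ d' : ℝ≥0, d' < d → ClockGuard.sat (fun x => q.2 x + d') (A.inv q.1)

/-- Conjunction of TIOAs (with disjoint clock sets, realized as a sum type). -/
def conjA (A : TIOA Act L1 C1) (B : TIOA Act L2 C2) :
    TIOA Act (L1 × L2) (C1 ⊕ C2) where
  init := (A.init, B.init)
  inputs := A.inputs ∪ B.inputs
  outputs := A.outputs ∪ B.outputs
  edges := { e |
    (∃ l1 l2 a g1 g2 c1 c2 l1' l2',
      e = ((l1, l2), a,
            ClockGuard.and (ClockGuard.map Sum.inl g1) (ClockGuard.map Sum.inr g2),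
            Sum.inl '' c1 ∪ Sum.inr '' c2, (l1', l2')) ∧
      a ∈ A.acts ∩ B.acts ∧ (l1, a, g1, c1, l1') ∈ A.edges ∧ (l2, a, g2, c2, l2') ∈ B.edges) ∨
    (∃ l1 l2 a g1 c1 l1',
      e = ((l1, l2), a, ClockGuard.map Sum.inl g1, Sum.inl '' c1, (l1', l2)) ∧
      a ∈ A.acts \ B.acts ∧ (l1, a, g1, c1, l1') ∈ A.edges) ∨
    (∃ l1 l2 a g2 c2 l2',
      e = ((l1, l2), a, ClockGuard.map Sum.inr g2, Sum.inr '' c2, (l1, l2')) ∧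
      a ∈ B.acts \ A.acts ∧ (l2, a, g2, c2, l2') ∈ B.edges) }
  inv := fun l =>
    ClockGuard.and (ClockGuard.map Sum.inl (A.inv l.1)) (ClockGuard.map Sum.inr (B.inv l.2))

/-- Parallel composition of TIOAs (with disjoint clock sets). -/
def parA (A : TIOA Act L1 C1) (B : TIOA Act L2 C2) :
    TIOA Act (L1 × L2) (C1 ⊕ C2) where
  init := (A.init, B.init)
  inputs := (A.inputs \ B.outputs) ∪ (B.inputs \ A.outputs)
  outputs := A.outputs ∪ B.outputs
  edges := { e |
    (∃ l1 l2 a g1 g2 c1 c2 l1' l2',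
      e = ((l1, l2), a,
            ClockGuard.and (ClockGuard.map Sum.inl g1) (ClockGuard.map Sum.inr g2),
            Sum.inl '' c1 ∪ Sum.inr '' c2, (l1', l2')) ∧
      a ∈ A.acts ∩ B.acts ∧ (l1, a, g1, c1, l1') ∈ A.edges ∧ (l2, a, g2, c2, l2') ∈ B.edges) ∨
    (∃ l1 l2 a g1 c1 l1',
      e = ((l1, l2), a, ClockGuard.map Sum.inl g1, Sum.inl '' c1, (l1', l2)) ∧
      a ∈ A.acts \ B.acts ∧ (l1, a, g1, c1, l1') ∈ A.edges) ∨
    (∃ l1 l2 a g2 c2 l2',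
      e = ((l1, l2), a, ClockGuard.map Sum.inr g2, Sum.inr '' c2, (l1, l2')) ∧
      a ∈ B.acts \ A.acts ∧ (l2, a, g2, c2, l2') ∈ B.edges) }
  inv := fun l =>
    ClockGuard.and (ClockGuard.map Sum.inl (A.inv l.1)) (ClockGuard.map Sum.inr (B.inv l.2))

/-- The canonical bijection between the states of `⟦A¹ ∧ A²⟧` (resp. `⟦A¹ ∥ A²⟧`)
and the states of `⟦A¹⟧ ∧ ⟦A²⟧` (resp. `⟦A¹⟧ ∥ ⟦A²⟧`):
`((l¹,l²), v) ↦ ((l¹, v∘inl), (l², v∘inr))`. -/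
def stateMap {L1 L2 C1 C2 : Type} (q : (L1 × L2) × ((C1 ⊕ C2) → ℝ≥0)) :
    (L1 × (C1 → ℝ≥0)) × (L2 × (C2 → ℝ≥0)) :=
  ((q.1.1, fun x => q.2 (Sum.inl x)), (q.1.2, fun x => q.2 (Sum.inr x)))

end TIOA

/-!
For deterministic specifications over a common alphabet, refinement is inclusion of timed
traces: a refinement relation carries traces of the refining system over to the refined one,
and conversely the pairs of states reached by a common trace form a refinement relation.
It therefore suffices to realise every timed trace of a locally consistent `S` by some
implementation of `S`. Such an implementation follows the trace, emitting its outputs at the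
prescribed times; wherever the trace cannot be followed (or has ended) it commits to some
output that local consistency makes available no earlier than the trace asks it to wait,
or delays forever when no such output exists.
-/

namespace TIOTS

variable {Act Q Q' : Type}

def CanDelay (S : TIOTS Act Q) (q : Q) (d : ℝ≥0) : Prop := ∃ q', S.delayTrans q d q'

namespace IsTIOTS

variable {S : TIOTS Act Q}

theorem mem_inputs_or_outputs (hS : S.IsTIOTS) {q q' : Q} {a : Act}
    (h : S.actTrans q a q') : a ∈ S.inputs ∨ a ∈ S.outputs :=
  hS.2.1 q a q' h

theorem act_det (hS : S.IsTIOTS) {q q' q'' : Q} {a : Act}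
    (h' : S.actTrans q a q') (h'' : S.actTrans q a q'') : q' = q'' :=
  hS.2.2.1 q a q' q'' h' h''

theorem delay_det (hS : S.IsTIOTS) {q q' q'' : Q} {d : ℝ≥0}
    (h' : S.delayTrans q d q') (h'' : S.delayTrans q d q'') : q' = q'' :=
  hS.2.2.2.1 q d q' q'' h' h''

theorem delay_zero (hS : S.IsTIOTS) (q : Q) : S.delayTrans q 0 q :=
  hS.2.2.2.2.1 q

theorem delay_add_iff (hS : S.IsTIOTS) {q q'' : Q} {d₁ d₂ : ℝ≥0} :
    S.delayTrans q (d₁ + d₂) q'' ↔ ∃ q', S.delayTrans q d₁ q' ∧ S.delayTrans q' d₂ q'' :=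
  hS.2.2.2.2.2 q q'' d₁ d₂

theorem delay_zero_iff (hS : S.IsTIOTS) {q q' : Q} : S.delayTrans q 0 q' ↔ q' = q :=
  ⟨fun h => hS.delay_det h (hS.delay_zero q), fun h => h ▸ hS.delay_zero q⟩

theorem canDelay_of_le (hS : S.IsTIOTS) {q : Q} {d e : ℝ≥0} (h : S.CanDelay q d)
    (hle : e ≤ d) : S.CanDelay q e := by
  obtain ⟨y, hy⟩ := h
  rw [← add_tsub_cancel_of_le hle] at hy
  obtain ⟨x, hx, -⟩ := hS.delay_add_iff.1 hy
  exact ⟨x, hx⟩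

theorem delay_of_delay_add (hS : S.IsTIOTS) {q x y : Q} {e d : ℝ≥0}
    (hx : S.delayTrans q e x) (hy : S.delayTrans q (e + d) y) : S.delayTrans x d y := by
  obtain ⟨m, hm, hmy⟩ := hS.delay_add_iff.1 hy
  rwa [hS.delay_det hx hm]

end IsTIOTS

/-- `S.Run s w D s'`: from `s`, the timed word `w` followed by a delay `D` leads to `s'`;
each action of `w` is paired with the delay preceding it. -/
def Run (S : TIOTS Act Q) : Q → List (ℝ≥0 × Act) → ℝ≥0 → Q → Prop
  | s, [], D, s' => S.delayTrans s D s'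
  | s, (d, a) :: w, D, s' => ∃ x y, S.delayTrans s d x ∧ S.actTrans x a y ∧ S.Run y w D s'

def traces (S : TIOTS Act Q) : Set (List (ℝ≥0 × Act) × ℝ≥0) :=
  {p | ∃ s, S.Run S.init p.1 p.2 s}

namespace IsTIOTS

variable {S : TIOTS Act Q}

theorem run_det (hS : S.IsTIOTS) {w : List (ℝ≥0 × Act)} {D : ℝ≥0} {s s' s'' : Q}
    (h' : S.Run s w D s') (h'' : S.Run s w D s'') : s' = s'' := by
  induction w generalizing s with
  | nil => exact hS.delay_det h' h''
  | cons da w ih =>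
    obtain ⟨x, y, hx, hy, h'⟩ := h'
    obtain ⟨x', y', hx', hy', h''⟩ := h''
    cases hS.delay_det hx hx'
    cases hS.act_det hy hy'
    exact ih h' h''

theorem run_add_iff (hS : S.IsTIOTS) {w : List (ℝ≥0 × Act)} {D d : ℝ≥0} {s s'' : Q} :
    S.Run s w (D + d) s'' ↔ ∃ s', S.Run s w D s' ∧ S.delayTrans s' d s'' := by
  induction w generalizing s with
  | nil => exact hS.delay_add_iff
  | cons da w ih =>
    simp only [Run, ih]
    exact ⟨fun ⟨x, y, hx, hy, s', h, h'⟩ => ⟨s', ⟨x, y, hx, hy, h⟩, h'⟩,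
      fun ⟨s', ⟨x, y, hx, hy, h⟩, h'⟩ => ⟨x, y, hx, hy, s', h, h'⟩⟩

theorem run_append_iff (hS : S.IsTIOTS) {w : List (ℝ≥0 × Act)} {D : ℝ≥0} {a : Act}
    {s s'' : Q} :
    S.Run s (w ++ [(D, a)]) 0 s'' ↔ ∃ s', S.Run s w D s' ∧ S.actTrans s' a s'' := by
  induction w generalizing s with
  | nil =>
    simp only [List.nil_append, Run, hS.delay_zero_iff]
    exact ⟨fun ⟨x, y, hx, hy, hs⟩ => ⟨x, hx, hs ▸ hy⟩, fun ⟨x, hx, hy⟩ => ⟨x, s'', hx, hy, rfl⟩⟩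
  | cons da w ih =>
    simp only [List.cons_append, Run, ih]
    exact ⟨fun ⟨x, y, hx, hy, s', h, h'⟩ => ⟨s', ⟨x, y, hx, hy, h⟩, h'⟩,
      fun ⟨s', ⟨x, y, hx, hy, h⟩, h'⟩ => ⟨x, y, hx, hy, s', h, h'⟩⟩

end IsTIOTS

theorem Refines.traces_subset {S : TIOTS Act Q} {T : TIOTS Act Q'} (h : S.Refines T)
    (hS : S.IsTIOTS) (hT : T.InputEnabled) (hout : S.outputs ⊆ T.outputs) :
    S.traces ⊆ T.traces := by
  obtain ⟨-, -, hin, -, R, hR₀, hR⟩ := h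
  suffices key : ∀ (w : List (ℝ≥0 × Act)) (D : ℝ≥0) (s t s' : _), R s t → S.Run s w D s' →
      ∃ t', T.Run t w D t' by
    rintro ⟨w, D⟩ ⟨s', hs'⟩
    exact key w D _ _ s' hR₀ hs'
  intro w D
  induction w with
  | nil =>
    intro s t s' hst hs'
    obtain ⟨t', ht', -⟩ := (hR s t hst).2.2.2.2 D s' hs'
    exact ⟨t', ht'⟩
  | cons da w ih =>
    obtain ⟨d, a⟩ := da
    rintro s t s' hst ⟨x, y, hx, hy, hs'⟩
    obtain ⟨u, hu, hxu⟩ := (hR s t hst).2.2.2.2 d x hx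
    obtain ⟨v, hv, hyv⟩ : ∃ v, T.actTrans u a v ∧ R y v := by
      rcases hS.mem_inputs_or_outputs hy with ha | ha
      · obtain ⟨v, hv⟩ := hT u a (hin ha)
        obtain ⟨y', hy', hyv⟩ := (hR x u hxu).1 a ⟨hin ha, ha⟩ v hv
        exact ⟨v, hv, hS.act_det hy' hy ▸ hyv⟩
      · exact (hR x u hxu).2.2.1 a ⟨ha, hout ha⟩ y hy
    obtain ⟨t', ht'⟩ := ih y v s' hyv hs'
    exact ⟨t', u, v, hu, hv, ht'⟩

theorem refines_of_traces_subset {S : TIOTS Act Q} {T : TIOTS Act Q'}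
    (hS : S.IsSpecification) (hT : T.IsTIOTS)
    (hin : S.inputs = T.inputs) (hout : S.outputs = T.outputs)
    (h : S.traces ⊆ T.traces) : S.Refines T := by
  refine ⟨hout ▸ hS.1.1, hin ▸ hS.1.1.symm, hin.le, hout.ge,
    fun s t => ∃ w D, S.Run S.init w D s ∧ T.Run T.init w D t,
    ⟨[], 0, hS.1.delay_zero _, hT.delay_zero _⟩, ?_⟩
  rintro s t ⟨w, D, hs, ht⟩
  refine ⟨?_, fun a ha => absurd (hin ▸ ha.1) ha.2, ?_,
    fun a ha => absurd (hout ▸ ha.1) ha.2, ?_⟩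
  · rintro a ⟨-, ha⟩ t' ht'
    obtain ⟨s', hs'⟩ := hS.2 s a ha
    exact ⟨s', hs', w ++ [(D, a)], 0, hS.1.run_append_iff.2 ⟨s, hs, hs'⟩,
      hT.run_append_iff.2 ⟨t, ht, ht'⟩⟩
  · rintro a - s' hs'
    have hrun := hS.1.run_append_iff.2 ⟨s, hs, hs'⟩
    obtain ⟨t', ht'⟩ := h (show (w ++ [(D, a)], 0) ∈ S.traces from ⟨s', hrun⟩)
    obtain ⟨t₀, ht₀, ht₀'⟩ := hT.run_append_iff.1 ht'
    exact ⟨t', hT.run_det ht₀ ht ▸ ht₀', w ++ [(D, a)], 0, hrun, ht'⟩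
  · intro d s' hs'
    have hrun := hS.1.run_add_iff.2 ⟨s, hs, hs'⟩
    obtain ⟨t', ht'⟩ := h (show (w, D + d) ∈ S.traces from ⟨s', hrun⟩)
    obtain ⟨t₀, ht₀, ht₀'⟩ := hT.run_add_iff.1 ht'
    exact ⟨t', hT.run_det ht₀ ht ▸ ht₀', w, D + d, hrun, ht'⟩

theorem refines_iff_traces_subset {S : TIOTS Act Q} {T : TIOTS Act Q'}
    (hS : S.IsSpecification) (hT : T.IsSpecification)
    (hin : S.inputs = T.inputs) (hout : S.outputs = T.outputs) :
    S.Refines T ↔ S.traces ⊆ T.traces :=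
  ⟨fun h => h.traces_subset hS.1 hT.2 hout.le, refines_of_traces_subset hS hT.1 hin hout⟩

theorem Mod.traces_subset {S : TIOTS Act Q} {P : TIOTS Act Q'} (hP : Mod S P)
    (hS : S.InputEnabled) : P.traces ⊆ S.traces :=
  hP.2.2.2.traces_subset hP.1.1.1 hS hP.2.2.1.le

def OutputAt (S : TIOTS Act Q) (s : Q) (d : ℝ≥0) (o : Act) : Prop :=
  o ∈ S.outputs ∧ ∃ x y, S.delayTrans s d x ∧ S.actTrans x o y

def DelaysForever (S : TIOTS Act Q) (s : Q) : Prop := ∀ d, S.CanDelay s d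

def OutputAfter (S : TIOTS Act Q) (s : Q) (h : ℝ≥0) (p : ℝ≥0 × Act) : Prop :=
  S.OutputAt s p.1 p.2 ∧ (S.CanDelay s h → h ≤ p.1)

theorem LocallyConsistent.exists_outputAfter {S : TIOTS Act Q} (hS : S.LocallyConsistent)
    {s : Q} (hs : ¬ S.DelaysForever s) (h : ℝ≥0) : ∃ p, S.OutputAfter s h p := by
  by_cases hh : S.CanDelay s h
  · obtain ⟨x, hx⟩ := hh
    rcases hS.2 x with hx' | ⟨d, y, o, ho, hy, z, hz⟩
    · refine absurd (fun d => hS.1.1.canDelay_of_le ?_ (le_add_self : d ≤ h + d)) hs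
      obtain ⟨y, hy⟩ := hx' d
      exact ⟨y, hS.1.1.delay_add_iff.2 ⟨x, hx, hy⟩⟩
    · exact ⟨(h + d, o), ⟨ho, y, z, hS.1.1.delay_add_iff.2 ⟨x, hx, hy⟩, hz⟩,
        fun _ => le_self_add⟩
  · rcases hS.2 s with hs' | ⟨d, y, o, ho, hy, z, hz⟩
    · exact absurd hs' hs
    · exact ⟨(d, o), ⟨ho, y, z, hy, hz⟩, fun h' => absurd h' hh⟩

open Classical in
noncomputable def deadline (S : TIOTS Act Q) (s : Q) (h : ℝ≥0) : Option (ℝ≥0 × Act) :=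
  if hp : ∃ p, S.OutputAfter s h p then some hp.choose else none

theorem outputAfter_of_mem_deadline {S : TIOTS Act Q} {s : Q} {h : ℝ≥0} {p : ℝ≥0 × Act}
    (hp : p ∈ S.deadline s h) : S.OutputAfter s h p := by
  unfold deadline at hp
  split_ifs at hp with h'
  · exact Option.some_injective _ hp ▸ h'.choose_spec
  · cases hp

theorem LocallyConsistent.delaysForever_of_deadline_eq_none {S : TIOTS Act Q}
    (hS : S.LocallyConsistent) {s : Q} {h : ℝ≥0} (hd : S.deadline s h = none) :
    S.DelaysForever s := by
  unfold deadline at hd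
  split_ifs at hd with h'
  by_contra hs
  exact h' (hS.exists_outputAfter hs h)

/-- `src` is the state entered by the last action; the first delay of `word` (or `final`, once
`word` is empty) is measured from `src`, not from the current time. -/
structure Plan (Q Act : Type) where
  src : Q
  word : List (ℝ≥0 × Act)
  final : ℝ≥0

namespace Plan

def holdTime (π : Plan Q Act) : ℝ≥0 :=
  match π.word with
  | [] => π.final
  | (d, _) :: _ => d

def advance (π : Plan Q Act) (s : Q) : Plan Q Act := ⟨s, π.word.tail, π.final⟩

end Plan

open Classical in
noncomputable def schedule (S : TIOTS Act Q) (π : Plan Q Act) : Option (ℝ≥0 × Act) :=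
  match π.word with
  | [] => S.deadline π.src π.final
  | (d, a) :: _ => if S.OutputAt π.src d a then some (d, a) else S.deadline π.src d

theorem outputAfter_of_mem_schedule {S : TIOTS Act Q} {π : Plan Q Act} {p : ℝ≥0 × Act}
    (hp : p ∈ S.schedule π) : S.OutputAfter π.src π.holdTime p := by
  obtain ⟨s, _ | ⟨⟨d, a⟩, w⟩, D⟩ := π
  · exact outputAfter_of_mem_deadline hp
  · simp only [schedule, Plan.holdTime] at hp ⊢
    split_ifs at hp with h
    · cases Option.some_injective _ hp
      exact ⟨h, fun _ => le_rfl⟩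
    · exact outputAfter_of_mem_deadline hp

theorem schedule_of_outputAt {S : TIOTS Act Q} {s : Q} {d : ℝ≥0} {a : Act}
    {w : List (ℝ≥0 × Act)} {D : ℝ≥0} (h : S.OutputAt s d a) :
    S.schedule ⟨s, (d, a) :: w, D⟩ = some (d, a) := by
  simp [schedule, h]

theorem LocallyConsistent.delaysForever_of_schedule_eq_none {S : TIOTS Act Q}
    (hS : S.LocallyConsistent) {π : Plan Q Act} (h : S.schedule π = none) :
    S.DelaysForever π.src := by
  obtain ⟨s, _ | ⟨⟨d, a⟩, w⟩, D⟩ := π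
  · exact hS.delaysForever_of_deadline_eq_none h
  · simp only [schedule] at h
    split_ifs at h
    exact hS.delaysForever_of_deadline_eq_none h

def PlanValid (S : TIOTS Act Q) (π : Plan Q Act) (e : ℝ≥0) : Prop :=
  S.CanDelay π.src e ∧ ∀ p ∈ S.schedule π, e ≤ p.1

theorem IsTIOTS.planValid_zero {S : TIOTS Act Q} (hS : S.IsTIOTS) (π : Plan Q Act) :
    S.PlanValid π 0 :=
  ⟨⟨_, hS.delay_zero _⟩, fun _ _ => zero_le⟩

theorem PlanValid.mono {S : TIOTS Act Q} (hS : S.IsTIOTS) {π : Plan Q Act} {e e' : ℝ≥0}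
    (h : S.PlanValid π e) (hle : e' ≤ e) : S.PlanValid π e' :=
  ⟨hS.canDelay_of_le h.1 hle, fun p hp => hle.trans (h.2 p hp)⟩

theorem IsTIOTS.planValid_of_le_holdTime {S : TIOTS Act Q} (hS : S.IsTIOTS)
    {π : Plan Q Act} {e : ℝ≥0} (h : S.CanDelay π.src π.holdTime) (hle : e ≤ π.holdTime) :
    S.PlanValid π e :=
  ⟨hS.canDelay_of_le h hle, fun _ hp => hle.trans ((outputAfter_of_mem_schedule hp).2 h)⟩

@[ext]
structure PlanState (S : TIOTS Act Q) where
  plan : Plan Q Act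
  elapsed : ℝ≥0
  valid : S.PlanValid plan elapsed

/-- After any action the head of the plan is dropped, even if the action was not the planned
one: a plan that can no longer be followed is harmless, since `schedule` then falls back to a
`deadline`. -/
def planImpl (S : TIOTS Act Q) (x₀ : S.PlanState) : TIOTS Act S.PlanState where
  init := x₀
  inputs := S.inputs
  outputs := S.outputs
  actTrans x a y := (a ∈ S.inputs ∨ S.schedule x.plan = some (x.elapsed, a)) ∧
    ∃ z, S.delayTrans x.plan.src x.elapsed z ∧ S.actTrans z a y.plan.src ∧
      y.plan = x.plan.advance y.plan.src ∧ y.elapsed = 0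
  delayTrans x d y := y.plan = x.plan ∧ y.elapsed = x.elapsed + d

section planImpl

variable {S : TIOTS Act Q} {x₀ : S.PlanState}

theorem isTIOTS_planImpl (hS : S.IsTIOTS) : (S.planImpl x₀).IsTIOTS := by
  refine ⟨hS.1, ?_, ?_, ?_, fun x => ⟨rfl, (add_zero _).symm⟩, ?_⟩
  · rintro x a y ⟨ha | ha, -⟩
    · exact Or.inl ha
    · exact Or.inr (outputAfter_of_mem_schedule ha).1.1
  · rintro x a y y' ⟨-, z, hz, hy, hyp, hye⟩ ⟨-, z', hz', hy', hyp', hye'⟩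
    cases hS.delay_det hz hz'
    have hsrc := hS.act_det hy hy'
    exact PlanState.ext (by rw [hyp, hyp', hsrc]) (hye.trans hye'.symm)
  · rintro x d y y' ⟨hp, he⟩ ⟨hp', he'⟩
    exact PlanState.ext (hp.trans hp'.symm) (he.trans he'.symm)
  · intro x y d₁ d₂
    constructor
    · rintro ⟨hp, he⟩
      have hv : S.PlanValid x.plan (x.elapsed + (d₁ + d₂)) := hp ▸ he ▸ y.valid
      refine ⟨⟨x.plan, x.elapsed + d₁, hv.mono hS ?_⟩, ⟨rfl, rfl⟩, hp, ?_⟩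
      · rw [← add_assoc]
        exact le_self_add
      · rw [he, add_assoc]
    · rintro ⟨m, ⟨hm, hme⟩, hy, hye⟩
      exact ⟨hy.trans hm, by rw [hye, hme, add_assoc]⟩

theorem inputEnabled_planImpl (hS : S.IsSpecification) : (S.planImpl x₀).InputEnabled := by
  intro x a ha
  obtain ⟨z, hz⟩ := x.valid.1
  obtain ⟨s', hs'⟩ := hS.2 z a ha
  exact ⟨⟨x.plan.advance s', 0, hS.1.planValid_zero _⟩, Or.inl ha, z, hz, hs', rfl, rfl⟩

theorem outputUrgent_planImpl (hS : S.IsTIOTS) (x : S.PlanState) :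
    (S.planImpl x₀).OutputUrgent x := by
  rintro o ho y d y' ⟨hi | hsch, -⟩ ⟨hp, he⟩
  · exact absurd ho (Set.disjoint_left.1 hS.1 hi)
  · have hle : x.elapsed + d ≤ x.elapsed + 0 := by
      rw [← he, add_zero]
      exact y'.valid.2 _ (hp ▸ hsch)
    exact le_antisymm (le_of_add_le_add_left hle) zero_le

theorem independentProgress_planImpl (hS : S.LocallyConsistent) (x : S.PlanState) :
    (S.planImpl x₀).IndependentProgress x := by
  cases hsch : S.schedule x.plan with
  | none =>
    have hf := hS.delaysForever_of_schedule_eq_none hsch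
    exact Or.inl fun d => ⟨⟨x.plan, x.elapsed + d, hf _, by simp [hsch]⟩, rfl, rfl⟩
  | some p =>
    obtain ⟨d, o⟩ := p
    have hle : x.elapsed ≤ d := x.valid.2 _ hsch
    obtain ⟨ho, z, s', hz, hs'⟩ := (outputAfter_of_mem_schedule hsch).1
    refine Or.inr ⟨d - x.elapsed, ⟨x.plan, d, ⟨z, hz⟩, by simp [hsch]⟩, o, ho,
      ⟨rfl, (add_tsub_cancel_of_le hle).symm⟩,
      ⟨x.plan.advance s', 0, hS.1.1.planValid_zero _⟩, Or.inr hsch, z, hz, hs', rfl, rfl⟩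

theorem isImplementation_planImpl (hS : S.LocallyConsistent) :
    (S.planImpl x₀).IsImplementation :=
  ⟨⟨isTIOTS_planImpl hS.1.1, inputEnabled_planImpl hS.1⟩,
    fun x => ⟨outputUrgent_planImpl hS.1.1 x, independentProgress_planImpl hS x⟩⟩

theorem refines_planImpl (hS : S.IsSpecification)
    (h₀ : S.delayTrans x₀.plan.src x₀.elapsed S.init) : (S.planImpl x₀).Refines S := by
  refine ⟨hS.1.1, hS.1.1.symm, subset_rfl, subset_rfl,
    fun x s => S.delayTrans x.plan.src x.elapsed s, h₀, ?_⟩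
  intro x s hxs
  refine ⟨?_, fun a ha => absurd ha.1 ha.2, ?_, fun a ha => absurd ha.1 ha.2, ?_⟩
  · rintro a ⟨ha, -⟩ s' hs'
    exact ⟨⟨x.plan.advance s', 0, hS.1.planValid_zero _⟩, ⟨Or.inl ha, s, hxs, hs', rfl, rfl⟩,
      hS.1.delay_zero s'⟩
  · rintro a - y ⟨-, z, hz, hy, -, hye⟩
    refine ⟨y.plan.src, hS.1.delay_det hz hxs ▸ hy, ?_⟩
    show S.delayTrans y.plan.src y.elapsed y.plan.src
    exact hye ▸ hS.1.delay_zero _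
  · rintro d y ⟨hp, he⟩
    obtain ⟨s', hs'⟩ := y.valid.1
    refine ⟨s', hS.1.delay_of_delay_add hxs ?_, hs'⟩
    rwa [hp, he] at hs'

theorem run_planImpl (hS : S.IsTIOTS) {w : List (ℝ≥0 × Act)} {D : ℝ≥0} {s s' : Q}
    (h : S.Run s w D s') :
    ∃ x', (S.planImpl x₀).Run ⟨⟨s, w, D⟩, 0, hS.planValid_zero _⟩ w D x' := by
  induction w generalizing s with
  | nil =>
    exact ⟨⟨⟨s, [], D⟩, D, hS.planValid_of_le_holdTime ⟨s', h⟩ le_rfl⟩, rfl, (zero_add D).symm⟩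
  | cons da w ih =>
    obtain ⟨d, a⟩ := da
    obtain ⟨z, y, hz, hy, h⟩ := h
    have hact : a ∈ S.inputs ∨ S.schedule ⟨s, (d, a) :: w, D⟩ = some (d, a) :=
      (hS.mem_inputs_or_outputs hy).imp id fun ha => schedule_of_outputAt ⟨ha, z, y, hz, hy⟩
    obtain ⟨x', hx'⟩ := ih h
    exact ⟨x', ⟨⟨s, (d, a) :: w, D⟩, d, hS.planValid_of_le_holdTime ⟨z, hz⟩ le_rfl⟩,
      ⟨⟨y, w, D⟩, 0, hS.planValid_zero _⟩, ⟨rfl, (zero_add d).symm⟩,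
      ⟨hact, z, hz, hy, rfl, rfl⟩, hx'⟩

end planImpl

theorem LocallyConsistent.exists_mod_of_mem_traces {S : TIOTS Act Q}
    (hS : S.LocallyConsistent) {p : List (ℝ≥0 × Act) × ℝ≥0} (hp : p ∈ S.traces) :
    ∃ (QP : Type) (P : TIOTS Act QP), Mod S P ∧ p ∈ P.traces := by
  obtain ⟨s', hs'⟩ := hp
  let x₀ : S.PlanState := ⟨⟨S.init, p.1, p.2⟩, 0, hS.1.1.planValid_zero _⟩
  exact ⟨_, S.planImpl x₀, ⟨isImplementation_planImpl hS, rfl, rfl,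
    refines_planImpl hS.1 (hS.1.1.delay_zero _)⟩, run_planImpl hS.1.1 hs'⟩

theorem mod_subset_iff_traces_subset {S : TIOTS Act Q} {T : TIOTS Act Q'}
    (hS : S.LocallyConsistent) (hT : T.IsSpecification)
    (hin : S.inputs = T.inputs) (hout : S.outputs = T.outputs) :
    (∀ (QP : Type) (P : TIOTS Act QP), Mod S P → Mod T P) ↔ S.traces ⊆ T.traces := by
  constructor
  · intro h p hp
    obtain ⟨QP, P, hPS, hpP⟩ := hS.exists_mod_of_mem_traces hp
    exact (h QP P hPS).traces_subset hT.2 hpP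
  · intro h QP P hPS
    have hPT := (hPS.traces_subset hS.1.2).trans h
    obtain ⟨hP, hPin, hPout, -⟩ := hPS
    exact ⟨hP, hPin.trans hin, hPout.trans hout,
      refines_of_traces_subset hP.1 hT.1 (hPin.trans hin) (hPout.trans hout) hPT⟩

end TIOTS

/-- Completeness of refinement with respect to
implementation-set inclusion. -/
theorem refines_iff_mod_subset {Act Q1 Q2 : Type}
    (S : TIOTS Act Q1) (T : TIOTS Act Q2)
    (hS : S.LocallyConsistent) (hT : T.LocallyConsistent)
    (hin : S.inputs = T.inputs) (hout : S.outputs = T.outputs) :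
    S.Refines T ↔
      ∀ (QP : Type) (P : TIOTS Act QP), TIOTS.Mod S P → TIOTS.Mod T P :=
  (TIOTS.refines_iff_traces_subset hS.1 hT.1 hin hout).trans
    (TIOTS.mod_subset_iff_traces_subset hS hT.1 hin hout).symm
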